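/- Transitions between thermal states of different Hamiltonians: let β > 0, let E : Fin m → ℝ and E′ : Fin m′ → ℝ be energy functions with partition functions Z, Z′ and Gibbs distributions τ, τ′, and let W ∈ ℝ. Consider the system Fin m ⊕ Fin m′ with energy function equal to E_s on the left summand and E′_s + W on the right summand, and let τ_tot be its Gibbs distribution; let ι_L τ and ι_R τ′ denote the distributions supported on the left (resp. right) summand equal there to τ (resp. τ′). Then: (a) there exists a stochastic matrix G with G τ_tot = τ_tot and G(ι_L τ) = ι_R τ′ if and only if β·W ≤ ln(Z′/Z); and (b) such maps exist in both directions (also from ι_R τ′ to ι_L τ) if and only if β·W = ln(Z′/Z), i.e. W = −kT·ln(Z/Z′). -/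
import Mathlib


open Finset

/-- A (column-)stochastic matrix: nonnegative entries, each column sums to 1.
It acts on probability vectors by `(G.mulVec p) j = ∑ i, G j i * p i`. -/
def IsStochastic {ι : Type*} [Fintype ι] (G : Matrix ι ι ℝ) : Prop :=
  (∀ i j, 0 ≤ G i j) ∧ ∀ j, ∑ i, G i j = 1

/-- The partition function `Z = ∑ i, exp (-β E i)`. -/
noncomputable def partZ {ι : Type*} [Fintype ι] (β : ℝ) (E : ι → ℝ) : ℝ :=
  ∑ i, Real.exp (-(β * E i))

/-- The Gibbs distribution `τ i = exp (-β E i) / Z`. -/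
noncomputable def gibbs {ι : Type*} [Fintype ι] (β : ℝ) (E : ι → ℝ) : ι → ℝ :=
  fun i => Real.exp (-(β * E i)) / partZ β E

/-- The energy function on `Fin m ⊕ Fin m'`: `E` on the left summand and `E' + W` on the
right summand. -/
def sumEnergy {m m' : ℕ} (E : Fin m → ℝ) (E' : Fin m' → ℝ) (W : ℝ) :
    Fin m ⊕ Fin m' → ℝ :=
  Sum.elim E (fun s => E' s + W)

/-- The distribution supported on the left summand, equal there to `p`. -/
def leftDist {m m' : ℕ} (p : Fin m → ℝ) : Fin m ⊕ Fin m' → ℝ :=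
  Sum.elim p (fun _ => 0)

/-- The distribution supported on the right summand, equal there to `p'`. -/
def rightDist {m m' : ℕ} (p' : Fin m' → ℝ) : Fin m ⊕ Fin m' → ℝ :=
  Sum.elim (fun _ => 0) p'

lemma partZ_pos' {ι : Type*} [Fintype ι] [Nonempty ι] (β : ℝ) (E : ι → ℝ) : 0 < partZ β E :=
  Finset.sum_pos (fun _ _ => Real.exp_pos _) Finset.univ_nonempty

lemma gibbs_sum_one {ι : Type*} [Fintype ι] [Nonempty ι] (β : ℝ) (E : ι → ℝ) :
    ∑ i, gibbs β E i = 1 := by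
  simp only [gibbs, ← Finset.sum_div]
  exact div_self (ne_of_gt (partZ_pos' β E))

lemma gibbs_pos {ι : Type*} [Fintype ι] [Nonempty ι] (β : ℝ) (E : ι → ℝ) (i : ι) :
    0 < gibbs β E i := div_pos (Real.exp_pos _) (partZ_pos' β E)

lemma frac1 (x z zt : ℝ) (hz : z ≠ 0) (hzt : zt ≠ 0) : z / zt * (x / z) = x / zt := by
  field_simp

lemma frac2 (x y z zt : ℝ) (hz : z ≠ 0) (hzt : zt ≠ 0) :
    y * z / zt * (x / z) = y * x / zt := by
  field_simp

lemma sumMatrix_mulVec {m m' : ℕ} (u v : Fin m ⊕ Fin m' → ℝ) (p : Fin m ⊕ Fin m' → ℝ) :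
    (Matrix.of fun j i => Sum.elim (fun _ => u j) (fun _ => v j) i).mulVec p
      = fun j => (∑ i, p (Sum.inl i)) * u j + (∑ s, p (Sum.inr s)) * v j := by
  funext j
  simp only [Matrix.mulVec, dotProduct, Matrix.of_apply, Fintype.sum_sum_type,
    Sum.elim_inl, Sum.elim_inr, ← Finset.mul_sum]
  ring

/-- **transitions between thermal states of different Hamiltonians.**
(a) A Gibbs-preserving stochastic matrix mapping `ι_L τ` to `ι_R τ'` exists iff
`β W ≤ ln (Z'/Z)`; (b) such maps exist in both directions iff `β W = ln (Z'/Z)`,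
i.e. `W = -kT ln (Z/Z')`. -/
theorem thermal_state_transitions {m m' : ℕ} (hm : 0 < m) (hm' : 0 < m')
    (β : ℝ) (hβ : 0 < β) (E : Fin m → ℝ) (E' : Fin m' → ℝ) (W : ℝ) :
    ((∃ G : Matrix (Fin m ⊕ Fin m') (Fin m ⊕ Fin m') ℝ, IsStochastic G ∧
        G.mulVec (gibbs β (sumEnergy E E' W)) = gibbs β (sumEnergy E E' W) ∧
        G.mulVec (leftDist (gibbs β E)) = rightDist (gibbs β E')) ↔
      β * W ≤ Real.log (partZ β E' / partZ β E)) ∧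
    (((∃ G : Matrix (Fin m ⊕ Fin m') (Fin m ⊕ Fin m') ℝ, IsStochastic G ∧
        G.mulVec (gibbs β (sumEnergy E E' W)) = gibbs β (sumEnergy E E' W) ∧
        G.mulVec (leftDist (gibbs β E)) = rightDist (gibbs β E')) ∧
      (∃ G : Matrix (Fin m ⊕ Fin m') (Fin m ⊕ Fin m') ℝ, IsStochastic G ∧
        G.mulVec (gibbs β (sumEnergy E E' W)) = gibbs β (sumEnergy E E' W) ∧
        G.mulVec (rightDist (gibbs β E')) = leftDist (gibbs β E))) ↔
      β * W = Real.log (partZ β E' / partZ β E)) := by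
  haveI : Nonempty (Fin m) := Fin.pos_iff_nonempty.mp hm
  haveI : Nonempty (Fin m') := Fin.pos_iff_nonempty.mp hm'
  have hZ : 0 < partZ β E := partZ_pos' β E
  have hZ' : 0 < partZ β E' := partZ_pos' β E'
  have hZt : 0 < partZ β (sumEnergy E E' W) := partZ_pos' _ _
  set τ := gibbs β (sumEnergy E E' W) with hτdef
  set L : Fin m ⊕ Fin m' → ℝ := leftDist (gibbs β E) with hLdef
  set R : Fin m ⊕ Fin m' → ℝ := rightDist (gibbs β E') with hRdef
  set a := partZ β E / partZ β (sumEnergy E E' W) with hadef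
  set b := Real.exp (-(β * W)) * partZ β E' / partZ β (sumEnergy E E' W) with hbdef
  have ha : 0 < a := div_pos hZ hZt
  have hb : 0 < b := div_pos (mul_pos (Real.exp_pos _) hZ') hZt
  have hLl : ∀ i, L (Sum.inl i) = gibbs β E i := fun _ => rfl
  have hLr : ∀ s, L (Sum.inr s) = 0 := fun _ => rfl
  have hRl : ∀ i, R (Sum.inl i) = 0 := fun _ => rfl
  have hRr : ∀ s, R (Sum.inr s) = gibbs β E' s := fun _ => rfl
  have hL0 : ∀ j, 0 ≤ L j := by
    rintro (i | s)
    · simpa [hLl] using (gibbs_pos β E i).le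
    · simp [hLr]
  have hR0 : ∀ j, 0 ≤ R j := by
    rintro (i | s)
    · simp [hRl]
    · simpa [hRr] using (gibbs_pos β E' s).le
  have hLs : ∑ j, L j = 1 := by
    rw [Fintype.sum_sum_type]
    simp [hLl, hLr, gibbs_sum_one]
  have hRs : ∑ j, R j = 1 := by
    rw [Fintype.sum_sum_type]
    simp [hRl, hRr, gibbs_sum_one]
  have hτab : ∀ j, τ j = a * L j + b * R j := by
    rintro (i | s)
    · rw [hτdef, hLl, hRl, mul_zero, add_zero, hadef]
      simp only [gibbs]
      rw [frac1 _ _ _ hZ.ne' hZt.ne']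
      simp only [sumEnergy, Sum.elim_inl]
    · rw [hτdef, hLr, hRr, mul_zero, zero_add, hbdef]
      simp only [gibbs]
      rw [frac2 _ _ _ _ hZ'.ne' hZt.ne']
      simp only [sumEnergy, Sum.elim_inr]
      rw [show -(β * (E' s + W)) = -(β * W) + -(β * E' s) by ring, Real.exp_add]
  -- sums of τ over each summand
  have hSLτ : ∑ i, τ (Sum.inl i) = a := by
    simp only [hτab, hLl, hRl, mul_zero, add_zero, ← Finset.mul_sum, gibbs_sum_one, mul_one]
  have hSRτ : ∑ s, τ (Sum.inr s) = b := by
    simp only [hτab, hLr, hRr, mul_zero, zero_add, ← Finset.mul_sum, gibbs_sum_one, mul_one]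
  -- forward directions
  have fwdLR : (∃ G : Matrix (Fin m ⊕ Fin m') (Fin m ⊕ Fin m') ℝ, IsStochastic G ∧
      G.mulVec τ = τ ∧ G.mulVec L = R) → a ≤ b := by
    rintro ⟨G, ⟨hG0, _⟩, hfix, hmap⟩
    obtain ⟨s⟩ := ‹Nonempty (Fin m')›
    have h1 : ∑ i, G (Sum.inr s) i * (a * L i) ≤ ∑ i, G (Sum.inr s) i * τ i := by
      refine Finset.sum_le_sum fun i _ => mul_le_mul_of_nonneg_left ?_ (hG0 _ _)
      rw [hτab i]
      nlinarith [hR0 i, hb.le]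
    have h2 : ∑ i, G (Sum.inr s) i * (a * L i) = a * R (Sum.inr s) := by
      have hmv := congrFun hmap (Sum.inr s)
      simp only [Matrix.mulVec, dotProduct] at hmv
      rw [← hmv, Finset.mul_sum]
      exact Finset.sum_congr rfl fun i _ => by ring
    have h3 : ∑ i, G (Sum.inr s) i * τ i = b * R (Sum.inr s) := by
      have hmv := congrFun hfix (Sum.inr s)
      simp only [Matrix.mulVec, dotProduct] at hmv
      rw [hmv, hτab, hLr, mul_zero, zero_add]
    have hRpos : 0 < R (Sum.inr s) := by rw [hRr]; exact gibbs_pos β E' s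
    rw [h2, h3] at h1
    exact le_of_mul_le_mul_right h1 hRpos
  have fwdRL : (∃ G : Matrix (Fin m ⊕ Fin m') (Fin m ⊕ Fin m') ℝ, IsStochastic G ∧
      G.mulVec τ = τ ∧ G.mulVec R = L) → b ≤ a := by
    rintro ⟨G, ⟨hG0, _⟩, hfix, hmap⟩
    obtain ⟨i0⟩ := ‹Nonempty (Fin m)›
    have h1 : ∑ i, G (Sum.inl i0) i * (b * R i) ≤ ∑ i, G (Sum.inl i0) i * τ i := by
      refine Finset.sum_le_sum fun i _ => mul_le_mul_of_nonneg_left ?_ (hG0 _ _)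
      rw [hτab i]
      nlinarith [hL0 i, ha.le]
    have h2 : ∑ i, G (Sum.inl i0) i * (b * R i) = b * L (Sum.inl i0) := by
      have hmv := congrFun hmap (Sum.inl i0)
      simp only [Matrix.mulVec, dotProduct] at hmv
      rw [← hmv, Finset.mul_sum]
      exact Finset.sum_congr rfl fun i _ => by ring
    have h3 : ∑ i, G (Sum.inl i0) i * τ i = a * L (Sum.inl i0) := by
      have hmv := congrFun hfix (Sum.inl i0)
      simp only [Matrix.mulVec, dotProduct] at hmv
      rw [hmv, hτab, hRl, mul_zero, add_zero]
    have hLpos : 0 < L (Sum.inl i0) := by rw [hLl]; exact gibbs_pos β E i0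
    rw [h2, h3] at h1
    exact le_of_mul_le_mul_right h1 hLpos
  -- constructions
  have bwdLR : a ≤ b → ∃ G : Matrix (Fin m ⊕ Fin m') (Fin m ⊕ Fin m') ℝ, IsStochastic G ∧
      G.mulVec τ = τ ∧ G.mulVec L = R := by
    intro hab
    have hab1 : a / b ≤ 1 := (div_le_one hb).mpr hab
    have hab0 : 0 ≤ a / b := (div_pos ha hb).le
    refine ⟨Matrix.of fun j i =>
      Sum.elim (fun _ => R j) (fun _ => (a / b) * L j + (1 - a / b) * R j) i, ⟨?_, ?_⟩, ?_, ?_⟩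
    · rintro j (i | s)
      · exact hR0 j
      · exact add_nonneg (mul_nonneg hab0 (hL0 j)) (mul_nonneg (by linarith) (hR0 j))
    · rintro (i | s)
      · simpa using hRs
      · simp only [Matrix.of_apply, Sum.elim_inr]
        rw [Finset.sum_add_distrib, ← Finset.mul_sum, ← Finset.mul_sum, hLs, hRs]
        ring
    · rw [sumMatrix_mulVec, hSLτ, hSRτ]
      funext j
      rw [hτab j]
      field_simp
      ring
    · rw [sumMatrix_mulVec]
      have h1 : ∑ i, L (Sum.inl i) = 1 := by
        have := hLs
        rw [Fintype.sum_sum_type] at this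
        simpa [hLr] using this
      have h2 : ∑ s, L (Sum.inr s) = 0 := by simp [hLr]
      rw [h1, h2]
      funext j
      ring
  have bwdRL : b ≤ a → ∃ G : Matrix (Fin m ⊕ Fin m') (Fin m ⊕ Fin m') ℝ, IsStochastic G ∧
      G.mulVec τ = τ ∧ G.mulVec R = L := by
    intro hba
    have hba1 : b / a ≤ 1 := (div_le_one ha).mpr hba
    have hba0 : 0 ≤ b / a := (div_pos hb ha).le
    refine ⟨Matrix.of fun j i =>
      Sum.elim (fun _ => (b / a) * R j + (1 - b / a) * L j) (fun _ => L j) i, ⟨?_, ?_⟩, ?_, ?_⟩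
    · rintro j (i | s)
      · exact add_nonneg (mul_nonneg hba0 (hR0 j)) (mul_nonneg (by linarith) (hL0 j))
      · exact hL0 j
    · rintro (i | s)
      · simp only [Matrix.of_apply, Sum.elim_inl]
        rw [Finset.sum_add_distrib, ← Finset.mul_sum, ← Finset.mul_sum, hLs, hRs]
        ring
      · simpa using hLs
    · rw [sumMatrix_mulVec, hSLτ, hSRτ]
      funext j
      rw [hτab j]
      field_simp
      ring
    · rw [sumMatrix_mulVec]
      have h1 : ∑ i, R (Sum.inl i) = 0 := by simp [hRl]
      have h2 : ∑ s, R (Sum.inr s) = 1 := by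
        have := hRs
        rw [Fintype.sum_sum_type] at this
        simpa [hRl] using this
      rw [h1, h2]
      funext j
      ring
  -- arithmetic equivalences
  have hee : Real.exp (β * W) * Real.exp (-(β * W)) = 1 := by
    rw [← Real.exp_add]; simp
  have hiff1 : a ≤ b ↔ β * W ≤ Real.log (partZ β E' / partZ β E) := by
    rw [Real.le_log_iff_exp_le (div_pos hZ' hZ), le_div_iff₀ hZ, hadef, hbdef,
      div_le_div_iff_of_pos_right hZt]
    constructor
    · intro h
      nlinarith [Real.exp_pos (β * W)]
    · intro h
      nlinarith [Real.exp_pos (-(β * W))]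
  have hiff2 : b ≤ a ↔ Real.log (partZ β E' / partZ β E) ≤ β * W := by
    rw [Real.log_le_iff_le_exp (div_pos hZ' hZ), div_le_iff₀ hZ, hadef, hbdef,
      div_le_div_iff_of_pos_right hZt]
    constructor
    · intro h
      nlinarith [Real.exp_pos (β * W)]
    · intro h
      nlinarith [Real.exp_pos (-(β * W))]
  refine ⟨⟨fun h => hiff1.mp (fwdLR h), fun h => bwdLR (hiff1.mpr h)⟩, ?_, ?_⟩
  · rintro ⟨h1, h2⟩
    exact le_antisymm (hiff1.mp (fwdLR h1)) (hiff2.mp (fwdRL h2))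
  · intro h
    exact ⟨bwdLR (hiff1.mpr h.le), bwdRL (hiff2.mpr h.ge)⟩
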